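/- The Information Diffusion Mechanism is individually rational: if buyer i truthfully reports v_i (with arbitrary diffusion choice), her utility is nonnegative. Specifically, a normal or unlucky buyer gets 0; an on-path buyer gets v*_{-d_{i+1}} − v*_{-d_i} ≥ 0 because −d_i ⊂ −d_{i+1}; the winner gets v*_{-d_{w+1}} − v*_{-d_w} ≥ 0. -/
import Mathlib


/-- The highest reported valuation among the buyers in `B` (zero if `B` is empty). -/
noncomputable def maxBid {N : Type} (v : N → ℝ) (B : Finset N) : ℝ :=
  B.fold max 0 v

/-- The IDM payment of buyer `i` (see the paper): on-path buyers `i ∈ Cw \ {w}` pay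
`v*_{−d_i} − v*_{−d_{i+1}}`, the winner pays `v*_{−d_w}`, everyone else pays `0`. -/
noncomputable def idmPay {N : Type} [DecidableEq N] (b : N → ℝ) (I : Finset N)
    (d : N → Finset N) (Cw : Finset N) (w : N) (next : N → N) (i : N) : ℝ :=
  if i ∈ Cw ∧ i ≠ w then maxBid b (I \ d i) - maxBid b (I \ d (next i))
  else if i = w then maxBid b (I \ d w)
  else 0

lemma maxBid_mono {N : Type} [DecidableEq N] (v : N → ℝ) {B B' : Finset N}
    (h : B ⊆ B') : maxBid v B ≤ maxBid v B' := by
  classical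
  unfold maxBid
  rw [Finset.fold_max_le]
  constructor
  · rw [Finset.le_fold_max]; left; rfl
  · intro x hx
    rw [Finset.le_fold_max]; right; exact ⟨x, h hx, le_rfl⟩

/-- IDM is individually rational.  If every buyer reports truthfully, then
every buyer's utility (allocation times true valuation, minus payment, where the item is
allocated to the winner `w`) is nonnegative: a normal or unlucky buyer gets `0`, an
on-path buyer gets `v*_{−d_{i+1}} − v*_{−d_i} ≥ 0` (since `d_{i+1} ⊆ d_i`, i.e.
`−d_i ⊆ −d_{i+1}`), and the winner gets `v*_{−d_{w+1}} − v*_{−d_w} ≥ 0`. -/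
theorem idm_individually_rational {N : Type} [DecidableEq N]
    (v : N → ℝ) (hv : ∀ j, 0 ≤ v j)    -- truthful reports
    (I : Finset N) (d : N → Finset N)
    (Cw : Finset N) (w : N) (next : N → N)
    (hw : w ∈ Cw)
    (hnest : ∀ i ∈ Cw, d (next i) ⊆ d i)     -- d_{i+1} ⊆ d_i along C_w
    (hwin : v w = maxBid v (I \ d (next w))) :  -- the winner's bid is v*_{−d_{w+1}}
    ∀ i, 0 ≤ (if i = w then v i else 0) - idmPay v I d Cw w next i := by
  intro i
  unfold idmPay
  by_cases hiw : i = w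
  · subst hiw
    simp only [if_pos rfl, ne_eq, not_true_eq_false, and_false, if_false]
    rw [hwin]
    simp only [if_true]
    have := maxBid_mono v (Finset.sdiff_subset_sdiff (Finset.Subset.refl I) (hnest _ hw))
    linarith
  · rw [if_neg hiw]
    by_cases hi : i ∈ Cw
    · rw [if_pos ⟨hi, hiw⟩]
      have := maxBid_mono v (Finset.sdiff_subset_sdiff (Finset.Subset.refl I) (hnest _ hi))
      linarith
    · rw [if_neg (by tauto), if_neg hiw]
      simp
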